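/- arXiv:2011.05886 — 3 statements merged into one kernel-verified Lean document; each statement's English description precedes it below -/
import Mathlib

section
/- The operators T_i defined on the exterior algebra by: T_i φ_E = -φ_E if {i,i+1} ⊆ E; T_i φ_E = t·φ_E if {i,i+1} ∩ E = ∅; T_i φ_E = φ_{s_i E} if i ∈ E, i+1 ∉ E; and T_i φ_E = (t-1)φ_E + t·φ_{s_i E} if i ∉ E, i+1 ∈ E, satisfy the quadratic relation (T_i - t)(T_i + 1) = 0 for all 1 ≤ i < N. -/
open Finset

noncomputable section

/-- The space of "fermionic" polynomials: formal linear combinations of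
monomials `φ_E = θ_{i₁}⋯θ_{i_m}` indexed by finite sets `E` of indices. -/
abbrev SP (K : Type) [Field K] := Finset ℕ →₀ K

variable {K : Type} [Field K]

/-- basis monomial φ_E -/
def phi (K : Type) [Field K] (E : Finset ℕ) : SP K := Finsupp.single E 1

/-- linear operator determined by its values on the basis {φ_E} -/
def opOf (v : Finset ℕ → SP K) : SP K →ₗ[K] SP K :=
  Finsupp.lsum K fun E => LinearMap.toSpanSingleton K (SP K) (v E)

/-- the image s_i E of E under the transposition swapping i, i+1 -/
def swapSet (i : ℕ) (E : Finset ℕ) : Finset ℕ := E.image (Equiv.swap i (i + 1))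

/-- the Hecke algebra operator T_i acting on anti-commuting variables -/
def heckeT (t : K) (i : ℕ) : SP K →ₗ[K] SP K :=
  opOf fun E =>
    if i ∈ E then
      (if i + 1 ∈ E then -phi K E else phi K (swapSet i E))
    else
      (if i + 1 ∈ E then (t - 1) • phi K E + t • phi K (swapSet i E)
       else t • phi K E)

lemma opOf_phi (v : Finset ℕ → SP K) (E : Finset ℕ) : opOf v (phi K E) = v E := by
  simp [opOf, phi]

lemma mem_swapSet (i : ℕ) (E : Finset ℕ) (a : ℕ) :
    a ∈ swapSet i E ↔ Equiv.swap i (i+1) a ∈ E := by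
  simp [swapSet, Finset.mem_image]
  constructor
  · rintro ⟨b, hb, rfl⟩; simpa using hb
  · intro h; exact ⟨_, h, by simp⟩

lemma swapSet_swapSet (i : ℕ) (E : Finset ℕ) : swapSet i (swapSet i E) = E := by
  ext a; simp [mem_swapSet]

lemma heckeT_phi (t : K) (i : ℕ) (E : Finset ℕ) :
    heckeT t i (phi K E) =
    if i ∈ E then
      (if i + 1 ∈ E then -phi K E else phi K (swapSet i E))
    else
      (if i + 1 ∈ E then (t - 1) • phi K E + t • phi K (swapSet i E)
       else t • phi K E) := opOf_phi _ _


/-- the operators `T_i` satisfy the quadratic relation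
`(T_i - t)(T_i + 1) = 0` for all `1 ≤ i < N`. -/
theorem heckeT_quadratic (K : Type) [Field K] (t : K) (N i : ℕ)
    (h1 : 1 ≤ i) (h2 : i < N) :
    (heckeT t i - t • (LinearMap.id : SP K →ₗ[K] SP K)) ∘ₗ
      (heckeT t i + (LinearMap.id : SP K →ₗ[K] SP K)) = 0 := by
  apply Finsupp.lhom_ext'
  intro E
  apply LinearMap.ext_ring
  simp only [LinearMap.comp_apply, LinearMap.zero_apply]
  have hE : ((Finsupp.lsingle E : K →ₗ[K] SP K) 1) = phi K E := rfl
  rw [hE]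
  by_cases hi : i ∈ E <;> by_cases hi1 : i + 1 ∈ E
  · simp [heckeT_phi, hi, hi1, sub_smul]
  · have hsi : i ∉ swapSet i E := by
      simp [mem_swapSet, Equiv.swap_apply_left, hi1]
    have hsi1 : i + 1 ∈ swapSet i E := by
      simp [mem_swapSet, Equiv.swap_apply_right, hi]
    simp only [LinearMap.add_apply, LinearMap.sub_apply, LinearMap.smul_apply, LinearMap.id_apply,
      map_add, heckeT_phi, hi, hi1, hsi, hsi1, if_true, if_false, swapSet_swapSet, map_smul]
    module
  · have hsi : i ∈ swapSet i E := by
      simp [mem_swapSet, Equiv.swap_apply_left, hi1]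
    have hsi1 : i + 1 ∉ swapSet i E := by
      simp [mem_swapSet, Equiv.swap_apply_right, hi]
    simp only [LinearMap.add_apply, LinearMap.sub_apply, LinearMap.smul_apply, LinearMap.id_apply,
      map_add, map_smul, heckeT_phi, hi, hi1, hsi, hsi1, if_true, if_false, swapSet_swapSet]
    module
  · simp only [LinearMap.add_apply, LinearMap.sub_apply, LinearMap.smul_apply, LinearMap.id_apply,
      map_add, map_smul, heckeT_phi, hi, hi1, if_false]
    module
end
end

section
/- The anticommutator of M and D satisfies MD + DM = [N]_t · Id on P, where [N]_t = (1 - t^N)/(1 - t) = 1 + t + ... + t^{N-1}. -/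
open Finset

noncomputable section

variable {K : Type} [Field K]

/-- signed exterior multiplication θ̂_i -/
def thetaHat (K : Type) [Field K] (i : ℕ) : SP K →ₗ[K] SP K :=
  opOf fun E =>
    if i ∈ E then 0
    else ((-1 : K) ^ (E.filter (· < i)).card) • phi K (insert i E)

/-- formal fermionic derivative ∂_i -/
def fermD (K : Type) [Field K] (i : ℕ) : SP K →ₗ[K] SP K :=
  opOf fun E =>
    if i ∈ E then ((-1 : K) ^ (E.filter (· < i)).card) • phi K (E.erase i)
    else 0

/-- M = Σ_{i=1}^N θ̂_i -/
def opM (K : Type) [Field K] (N : ℕ) : SP K →ₗ[K] SP K :=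
  ∑ i ∈ Finset.Icc 1 N, thetaHat K i

/-- D = Σ_{i=1}^N t^{i-1} ∂_i -/
def opD (t : K) (N : ℕ) : SP K →ₗ[K] SP K :=
  ∑ i ∈ Finset.Icc 1 N, t ^ (i - 1) • fermD K i

lemma thetaHat_phi (i : ℕ) (E : Finset ℕ) : thetaHat K i (phi K E) =
    if i ∈ E then 0
    else ((-1 : K) ^ (E.filter (· < i)).card) • phi K (insert i E) := by
  rw [thetaHat, opOf_phi]

lemma fermD_phi (i : ℕ) (E : Finset ℕ) : fermD K i (phi K E) =
    if i ∈ E then ((-1 : K) ^ (E.filter (· < i)).card) • phi K (E.erase i)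
    else 0 := by
  rw [fermD, opOf_phi]

lemma anticomm (i j : ℕ) (E : Finset ℕ) :
    thetaHat K i (fermD K j (phi K E)) + fermD K j (thetaHat K i (phi K E)) =
      if i = j then phi K E else 0 := by
  by_cases hij : i = j
  · subst hij
    rw [if_pos rfl]
    by_cases hiE : i ∈ E
    · rw [fermD_phi, if_pos hiE, thetaHat_phi, if_pos hiE, map_smul, map_zero, add_zero,
        thetaHat_phi, if_neg (Finset.notMem_erase i E)]
      have hfe : (E.erase i).filter (· < i) = E.filter (· < i) := by
        rw [Finset.filter_erase, Finset.erase_eq_of_notMem]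
        simp
      rw [hfe, Finset.insert_erase hiE, smul_smul, ← pow_add, Even.neg_one_pow ⟨_, rfl⟩, one_smul]
    · rw [fermD_phi, if_neg hiE, map_zero, zero_add, thetaHat_phi, if_neg hiE, map_smul,
        fermD_phi, if_pos (Finset.mem_insert_self i E), Finset.erase_insert hiE]
      have hfe : (insert i E).filter (· < i) = E.filter (· < i) := by
        rw [Finset.filter_insert, if_neg (lt_irrefl i)]
      rw [hfe, smul_smul, ← pow_add, Even.neg_one_pow ⟨_, rfl⟩, one_smul]
  · rw [if_neg hij]
    by_cases hjE : j ∈ E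
    · by_cases hiE : i ∈ E
      · rw [fermD_phi, if_pos hjE, thetaHat_phi, if_pos hiE, map_smul, thetaHat_phi,
          if_pos (Finset.mem_erase.mpr ⟨hij, hiE⟩), map_zero, smul_zero, add_zero]
      · rw [fermD_phi, if_pos hjE, thetaHat_phi, if_neg hiE, map_smul, map_smul,
          thetaHat_phi, if_neg (fun h => hiE (Finset.mem_of_mem_erase h)),
          fermD_phi, if_pos (Finset.mem_insert_of_mem hjE)]
        set a := (E.filter (· < j)).card with ha
        set b := ((E.erase j).filter (· < i)).card with hb
        set c := (E.filter (· < i)).card with hc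
        set d := ((insert i E).filter (· < j)).card with hd
        have hcb : c = b + (if j < i then 1 else 0) := by
          rw [hb, Finset.filter_erase]
          by_cases hji : j < i
          · have hjm : j ∈ E.filter (fun x => x < i) := Finset.mem_filter.mpr ⟨hjE, hji⟩
            rw [if_pos hji, Finset.card_erase_of_mem hjm]
            have : 1 ≤ c := Finset.card_pos.mpr ⟨j, hjm⟩
            omega
          · rw [if_neg hji, Finset.erase_eq_of_notMem (s := E.filter (fun x => x < i)) (a := j)
              (fun h => hji (Finset.mem_filter.mp h).2), add_zero]
        have hda : d = a + (if i < j then 1 else 0) := by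
          rw [hd, Finset.filter_insert]
          by_cases hijlt : i < j
          · rw [if_pos hijlt, if_pos hijlt,
              Finset.card_insert_of_notMem (fun h => hiE (Finset.mem_filter.mp h).1)]
          · rw [if_neg hijlt, if_neg hijlt, add_zero]
        have hset : insert i (E.erase j) = (insert i E).erase j :=
          (Finset.erase_insert_of_ne (s := E) hij).symm
        rw [hset, smul_smul, smul_smul, ← add_smul, ← pow_add, ← pow_add]
        have hpar : (-1 : K) ^ (a + b) + (-1 : K) ^ (c + d) = 0 := by
          have h1 : c + d = a + b + 1 := by
            rcases Nat.lt_or_ge i j with h | h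
            · have : ¬ j < i := by omega
              rw [hcb, hda, if_pos h, if_neg this]; omega
            · have h' : j < i := by omega
              rw [hcb, hda, if_pos h', if_neg (by omega)]; omega
          rw [h1, pow_succ]
          ring
        rw [hpar, zero_smul]
    · by_cases hiE : i ∈ E
      · rw [fermD_phi, if_neg hjE, map_zero, zero_add, thetaHat_phi, if_pos hiE, map_zero]
      · rw [fermD_phi, if_neg hjE, map_zero, zero_add, thetaHat_phi, if_neg hiE, map_smul,
          fermD_phi, if_neg (by simp [hjE, Ne.symm hij]), smul_zero]

lemma anticomm_op (i j : ℕ) :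
    thetaHat K i ∘ₗ fermD K j + fermD K j ∘ₗ thetaHat K i =
      if i = j then (LinearMap.id : SP K →ₗ[K] SP K) else 0 := by
  refine Finsupp.lhom_ext fun E b => ?_
  have hb : (Finsupp.single E b : SP K) = b • phi K E := by
    simp [phi, Finsupp.smul_single]
  simp only [LinearMap.add_apply, LinearMap.comp_apply, hb, map_smul]
  rw [anticomm]
  split <;> simp

lemma anticomm_apply (i j : ℕ) (g : SP K) :
    thetaHat K i (fermD K j g) + fermD K j (thetaHat K i g) =
      if i = j then g else 0 := by
  have h := congrArg (fun L => L g) (anticomm_op (K := K) i j)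
  simp only [LinearMap.add_apply, LinearMap.comp_apply] at h
  rw [h]
  split <;> simp


/-- MD + DM = [N]_t · Id on P = span{φ_E : E ⊆ {1,…,N}},
where [N]_t = 1 + t + ⋯ + t^{N-1}. -/
theorem anticommutator_opM_opD (K : Type) [Field K] (t : K) (N : ℕ) (f : SP K)
    (hf : ∀ E ∈ f.support, E ⊆ Finset.Icc 1 N) :
    opM K N (opD t N f) + opD t N (opM K N f) =
      (∑ i ∈ Finset.range N, t ^ i) • f := by
  
  have h1 : opM K N (opD t N f) =
      ∑ j ∈ Finset.Icc 1 N, ∑ i ∈ Finset.Icc 1 N,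
        t ^ (j - 1) • thetaHat K i (fermD K j f) := by
    refine Eq.trans ?_ (Finset.sum_comm)
    rw [opM, opD, LinearMap.sum_apply]
    refine Finset.sum_congr rfl fun i _ => ?_
    rw [LinearMap.sum_apply, map_sum]
    refine Finset.sum_congr rfl fun j _ => ?_
    rw [LinearMap.smul_apply, map_smul]
  have h2 : opD t N (opM K N f) =
      ∑ j ∈ Finset.Icc 1 N, ∑ i ∈ Finset.Icc 1 N,
        t ^ (j - 1) • fermD K j (thetaHat K i f) := by
    rw [opM, opD, LinearMap.sum_apply, LinearMap.sum_apply]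
    refine Finset.sum_congr rfl fun j _ => ?_
    rw [LinearMap.smul_apply, map_sum, Finset.smul_sum]
  rw [h1, h2, ← Finset.sum_add_distrib]
  have h3 : ∀ j ∈ Finset.Icc 1 N,
      ((∑ i ∈ Finset.Icc 1 N, t ^ (j - 1) • thetaHat K i (fermD K j f)) +
       ∑ i ∈ Finset.Icc 1 N, t ^ (j - 1) • fermD K j (thetaHat K i f)) =
      t ^ (j - 1) • f := by
    intro j hj
    rw [← Finset.sum_add_distrib]
    have : ∀ i ∈ Finset.Icc 1 N,
        (t ^ (j - 1) • thetaHat K i (fermD K j f) +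
         t ^ (j - 1) • fermD K j (thetaHat K i f)) =
        if i = j then t ^ (j - 1) • f else 0 := by
      intro i _
      rw [← smul_add, anticomm_apply]
      split <;> simp
    rw [Finset.sum_congr rfl this, Finset.sum_ite_eq' (Finset.Icc 1 N) j
      (fun _ => t ^ (j - 1) • f), if_pos hj]
  rw [Finset.sum_congr rfl h3, ← Finset.sum_smul]
  congr 1
  rw [← Finset.Ico_add_one_right_eq_Icc, Finset.sum_Ico_eq_sum_range]
  simp
end
end

section
/- Suppose f, g lie in an inner product space on which an operator T is self-adjoint and satisfies T² = (t-1)T + t. If g = (T + b) f for a scalar b and ⟨f, g⟩ = 0, then ‖g‖² = (1 - b)(t + b) ‖f‖². In particular if b = 1 or b = -t then g = 0. -/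
/-- if T is self-adjoint for a symmetric bilinear form,
T² = (t-1)T + t, g = (T + b)f and ⟨f,g⟩ = 0, then
‖g‖² = (1-b)(t+b)‖f‖²; if moreover the form is anisotropic and b = 1 or
b = -t, then g = 0. -/
theorem hecke_norm_step (K V : Type) [Field K] [AddCommGroup V] [Module K V]
    (B : V →ₗ[K] V →ₗ[K] K) (hsym : ∀ u v, B u v = B v u)
    (T : V →ₗ[K] V) (hsa : ∀ u v, B (T u) v = B u (T v))
    (t : K) (hquad : T ∘ₗ T = (t - 1) • T + t • (LinearMap.id : V →ₗ[K] V))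
    (f g : V) (b : K) (hg : g = T f + b • f) (horth : B f g = 0) :
    B g g = (1 - b) * (t + b) * B f f ∧
    ((∀ v, B v v = 0 → v = 0) → (b = 1 ∨ b = -t) → g = 0) := by
  have hTT : T (T f) = (t - 1) • T f + t • f := by
    have := congrArg (fun L : V →ₗ[K] V => L f) hquad
    simpa using this
  have hBf : B f (T f) = -(b * B f f) := by
    rw [hg] at horth
    simp only [map_add, map_smul, smul_eq_mul] at horth
    linear_combination horth
  have h1 : B (T f) (T f) = (t - 1) * B f (T f) + t * B f f := by
    rw [hsa, hTT]
    simp [map_add, map_smul, smul_eq_mul]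
  have hfT : B (T f) f = B f (T f) := hsym _ _
  have key : B g g = (1 - b) * (t + b) * B f f := by
    rw [hg]
    simp only [map_add, map_smul, LinearMap.add_apply, LinearMap.smul_apply,
      smul_eq_mul]
    linear_combination h1 + b * hfT + (t - 1 + 2 * b) * hBf
  refine ⟨key, fun han hb => han g ?_⟩
  rcases hb with hb | hb <;> rw [key, hb] <;> ring
end
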